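/- arXiv:2206.15386 — 8 statements merged into one kernel-verified Lean document; each statement's English description precedes it below -/
import Mathlib

section
/- Let F be a 3×3 real matrix with positive determinant, {t₁, t₂, n} an orthonormal basis of ℝ³, and F = R·A the QR decomposition of F with respect to that basis, where A = A_nn n⊗n + A_{t₁t₁} t₁⊗t₁ + A_{t₂t₂} t₂⊗t₂ + A_{t₁n} t₁⊗n + A_{t₂n} t₂⊗n + A_{t₁t₂} t₁⊗t₂ with A_nn, A_{t₁t₁}, A_{t₂t₂} > 0. Then A_nn = 1 / |F^{-T} n|, where F^{-T} is the inverse transpose of F and |·| is the Euclidean norm. -/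
/-!
Since `A` is upper triangular in the basis `{t₁, t₂, n}`, the vector `n` is an eigenvector of
`Aᵀ` with eigenvalue `A_nn`. Hence `Fᵀ (R n) = Aᵀ Rᵀ R n = A_nn n`, i.e. `F⁻ᵀ n = A_nn⁻¹ R n`,
and `R` preserves the length of the unit vector `n`.
-/

open Matrix

section

variable {m K : Type*} [Fintype m]

theorem dotProduct_mulVec_self_of_transpose_mul_self_eq_one [DecidableEq m] [CommRing K]
    {R : Matrix m m K} (hR : Rᵀ * R = 1) (v : m → K) :
    (R *ᵥ v) ⬝ᵥ (R *ᵥ v) = v ⬝ᵥ v := by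
  rw [dotProduct_mulVec, ← vecMul_transpose, vecMul_vecMul, hR, vecMul_one]

theorem vecMul_nonsing_inv_eq_of_vecMul_eq [DecidableEq m] [Field K]
    {F : Matrix m m K} (hF : F.det ≠ 0) {v w : m → K} (h : w ᵥ* F = v) :
    v ᵥ* F⁻¹ = w := by
  rw [← h, vecMul_vecMul, mul_nonsing_inv F (isUnit_iff_ne_zero.mpr hF), vecMul_one]

theorem inv_transpose_mulVec_of_vecMul_eq_smul [DecidableEq m] [Field K]
    {R A : Matrix m m K} (hR : Rᵀ * R = 1) (hRA : (R * A).det ≠ 0)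
    {a : K} (ha : a ≠ 0) {n : m → K} (hAn : n ᵥ* A = a • n) :
    ((R * A)⁻¹)ᵀ *ᵥ n = a⁻¹ • (R *ᵥ n) := by
  rw [mulVec_transpose]
  refine vecMul_nonsing_inv_eq_of_vecMul_eq hRA ?_
  rw [smul_vecMul, ← vecMul_transpose, ← vecMul_vecMul, vecMul_vecMul n, hR, vecMul_one,
    hAn, smul_smul, inv_mul_cancel₀ ha, one_smul]

theorem vecMul_upperTriangular_eq_smul [CommRing K] {t₁ t₂ n : m → K}
    (hn : n ⬝ᵥ n = 1) (ht₁n : t₁ ⬝ᵥ n = 0) (ht₂n : t₂ ⬝ᵥ n = 0)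
    (Ann At₁t₁ At₂t₂ At₁n At₂n At₁t₂ : K) :
    n ᵥ* (Ann • vecMulVec n n + At₁t₁ • vecMulVec t₁ t₁ + At₂t₂ • vecMulVec t₂ t₂ +
        At₁n • vecMulVec t₁ n + At₂n • vecMulVec t₂ n + At₁t₂ • vecMulVec t₁ t₂) = Ann • n := by
  have hnt₁ : n ⬝ᵥ t₁ = 0 := by rw [dotProduct_comm, ht₁n]
  have hnt₂ : n ⬝ᵥ t₂ = 0 := by rw [dotProduct_comm, ht₂n]
  simp only [vecMul_add, vecMul_smul, vecMul_vecMulVec, hn, hnt₁, hnt₂, one_smul, zero_smul,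
    smul_zero, add_zero]

end

theorem Ann_eq_inv_norm_invTranspose_mulVec_general
    (F : Matrix (Fin 3) (Fin 3) ℝ) (hF : 0 < F.det)
    (t₁ t₂ n : Fin 3 → ℝ)
    (hn : n ⬝ᵥ n = 1)
    (ht₁n : t₁ ⬝ᵥ n = 0) (ht₂n : t₂ ⬝ᵥ n = 0)
    (R : Matrix (Fin 3) (Fin 3) ℝ) (hR : Rᵀ * R = 1)
    (Ann At₁t₁ At₂t₂ : ℝ) (At₁n At₂n At₁t₂ : ℝ)
    (hAnn : 0 < Ann)
    (hFRA : F = R *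
      (Ann • vecMulVec n n + At₁t₁ • vecMulVec t₁ t₁ + At₂t₂ • vecMulVec t₂ t₂ +
        At₁n • vecMulVec t₁ n + At₂n • vecMulVec t₂ n + At₁t₂ • vecMulVec t₁ t₂)) :
    Ann = 1 / Real.sqrt (((F⁻¹)ᵀ *ᵥ n) ⬝ᵥ ((F⁻¹)ᵀ *ᵥ n)) := by
  have hFn : (F⁻¹)ᵀ *ᵥ n = Ann⁻¹ • (R *ᵥ n) := by
    subst hFRA
    exact inv_transpose_mulVec_of_vecMul_eq_smul hR hF.ne' hAnn.ne'
      (vecMul_upperTriangular_eq_smul hn ht₁n ht₂n _ _ _ _ _ _)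
  have hFn_sq : ((F⁻¹)ᵀ *ᵥ n) ⬝ᵥ ((F⁻¹)ᵀ *ᵥ n) = Ann⁻¹ ^ 2 := by
    rw [hFn, smul_dotProduct, dotProduct_smul,
      dotProduct_mulVec_self_of_transpose_mul_self_eq_one hR, hn, smul_eq_mul, smul_eq_mul,
      mul_one, sq]
  rw [hFn_sq, Real.sqrt_sq (inv_nonneg.mpr hAnn.le), one_div, inv_inv]

/-- In the QR decomposition `F = R · A` of a matrix `F` with positive determinant
with respect to an orthonormal basis `{t₁, t₂, n}`, the coefficient `A_nn` equals
`1 / |F⁻ᵀ n|`. -/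
theorem Ann_eq_inv_norm_invTranspose_mulVec
    (F : Matrix (Fin 3) (Fin 3) ℝ) (hF : 0 < F.det)
    (t₁ t₂ n : Fin 3 → ℝ)
    (ht₁ : t₁ ⬝ᵥ t₁ = 1) (ht₂ : t₂ ⬝ᵥ t₂ = 1) (hn : n ⬝ᵥ n = 1)
    (ht₁t₂ : t₁ ⬝ᵥ t₂ = 0) (ht₁n : t₁ ⬝ᵥ n = 0) (ht₂n : t₂ ⬝ᵥ n = 0)
    (R : Matrix (Fin 3) (Fin 3) ℝ) (hR : Rᵀ * R = 1) (hRdet : R.det = 1)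
    (Ann At₁t₁ At₂t₂ : ℝ) (At₁n At₂n At₁t₂ : ℝ)
    (hAnn : 0 < Ann) (hAt₁t₁ : 0 < At₁t₁) (hAt₂t₂ : 0 < At₂t₂)
    (hFRA : F = R *
      (Ann • vecMulVec n n + At₁t₁ • vecMulVec t₁ t₁ + At₂t₂ • vecMulVec t₂ t₂ +
        At₁n • vecMulVec t₁ n + At₂n • vecMulVec t₂ n + At₁t₂ • vecMulVec t₁ t₂)) :
    Ann = 1 / Real.sqrt (((F⁻¹)ᵀ *ᵥ n) ⬝ᵥ ((F⁻¹)ᵀ *ᵥ n)) :=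
  Ann_eq_inv_norm_invTranspose_mulVec_general F hF t₁ t₂ n hn ht₁n ht₂n R hR Ann At₁t₁ At₂t₂ At₁n
    At₂n At₁t₂ hAnn hFRA
end

section
/- Let W: {2×2 matrices with positive determinant} → ℝ be defined by W(F) = (μ/2)(|F|² − 2 − 2 log det F) + (λ/2)(det F − 1)², with μ, λ > 0. Then W(F) ≥ 0 for all F with det F > 0, and W(F) = 0 if and only if F ∈ SO(2). -/
open Matrix

/-!
For a `2 × 2` matrix `F = [[a, b], [c, d]]` one has
`|F|² - 2 det F = (a - d)² + (b + c)²`, and `log t ≤ t - 1` for `t > 0`. Hence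
`W(F) = (μ/2)((a - d)² + (b + c)²) + μ (det F - 1 - log det F) + (λ/2)(det F - 1)²`
is a sum of three nonnegative terms. It vanishes only if `det F = 1` and `F` is conformal
(`d = a`, `c = -b`), and a conformal matrix satisfies `Fᵀ F = (det F) • 1`.
-/

namespace Matrix

theorem sum_sum_sq_eq_trace_transpose_mul_self {m n R : Type*} [Fintype m] [Fintype n]
    [Semiring R] (F : Matrix m n R) :
    ∑ i, ∑ j, F i j ^ 2 = trace (Fᵀ * F) := by
  simp only [trace, diag, mul_apply, transpose_apply, sq]
  exact Finset.sum_comm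

section FinTwo

variable {R : Type*} [CommRing R] (F : Matrix (Fin 2) (Fin 2) R)

theorem sum_sum_sq_sub_two_mul_det_fin_two :
    ∑ i, ∑ j, F i j ^ 2 - 2 * F.det = (F 0 0 - F 1 1) ^ 2 + (F 0 1 + F 1 0) ^ 2 := by
  simp only [det_fin_two, Fin.sum_univ_two]
  ring

variable [LinearOrder R] [IsStrictOrderedRing R]

theorem two_mul_det_le_sum_sum_sq_fin_two : 2 * F.det ≤ ∑ i, ∑ j, F i j ^ 2 := by
  have := sum_sum_sq_sub_two_mul_det_fin_two F
  nlinarith [sq_nonneg (F 0 0 - F 1 1), sq_nonneg (F 0 1 + F 1 0)]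

theorem transpose_mul_self_eq_det_smul_of_sum_sum_sq_eq_two_mul_det
    (h : ∑ i, ∑ j, F i j ^ 2 = 2 * F.det) : Fᵀ * F = F.det • 1 := by
  have hsq : (F 0 0 - F 1 1) ^ 2 + (F 0 1 + F 1 0) ^ 2 = 0 := by
    rw [← sum_sum_sq_sub_two_mul_det_fin_two, h, sub_self]
  obtain ⟨hdiag, hoff⟩ := (add_eq_zero_iff_of_nonneg (sq_nonneg _) (sq_nonneg _)).mp hsq
  have hd : F 1 1 = F 0 0 := (sub_eq_zero.mp (pow_eq_zero_iff two_ne_zero |>.mp hdiag)).symm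
  have hc : F 1 0 = -F 0 1 := eq_neg_of_add_eq_zero_right (pow_eq_zero_iff two_ne_zero |>.mp hoff)
  ext i j
  fin_cases i <;> fin_cases j <;>
    simp only [Fin.zero_eta, Fin.mk_one, Fin.isValue, mul_apply, transpose_apply,
      Fin.sum_univ_two, det_fin_two, hd, hc, smul_apply, smul_eq_mul, one_apply_eq,
      one_apply_ne zero_ne_one, one_apply_ne one_ne_zero] <;> ring

end FinTwo

end Matrix

/-- The 2D compressible neo-Hookean energy
`W(F) = (μ/2)(|F|² − 2 − 2 log det F) + (λ/2)(det F − 1)²` is nonnegative on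
matrices with positive determinant, and vanishes exactly on `SO(2)`. -/
theorem neoHookean2D_nonneg_and_zero_iff_SO2
    (μ lam : ℝ) (hμ : 0 < μ) (hlam : 0 < lam)
    (W : Matrix (Fin 2) (Fin 2) ℝ → ℝ)
    (hW : ∀ F, W F = μ / 2 * ((∑ i, ∑ j, (F i j) ^ 2) - 2 - 2 * Real.log F.det) +
      lam / 2 * (F.det - 1) ^ 2) :
    ∀ F : Matrix (Fin 2) (Fin 2) ℝ, 0 < F.det →
      0 ≤ W F ∧ (W F = 0 ↔ Fᵀ * F = 1 ∧ F.det = 1) := by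
  intro F hF
  set s := ∑ i, ∑ j, F i j ^ 2 with hs
  have hconf : 0 ≤ μ / 2 * (s - 2 * F.det) :=
    mul_nonneg (by positivity) (sub_nonneg.mpr (two_mul_det_le_sum_sum_sq_fin_two F))
  have hlog : 0 ≤ μ * (F.det - 1 - Real.log F.det) :=
    mul_nonneg hμ.le (by linarith [Real.log_le_sub_one_of_pos hF])
  have hvol : 0 ≤ lam / 2 * (F.det - 1) ^ 2 := by positivity
  have hsplit : W F = μ / 2 * (s - 2 * F.det) + μ * (F.det - 1 - Real.log F.det) +
      lam / 2 * (F.det - 1) ^ 2 := by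
    rw [hW]; ring
  have hnonneg : 0 ≤ W F := hsplit ▸ add_nonneg (add_nonneg hconf hlog) hvol
  refine ⟨hnonneg, fun h0 => ?_, fun ⟨hortho, hdet⟩ => ?_⟩
  · rw [hsplit, add_eq_zero_iff_of_nonneg (add_nonneg hconf hlog) hvol,
      add_eq_zero_iff_of_nonneg hconf hlog] at h0
    obtain ⟨⟨hconf0, -⟩, hvol0⟩ := h0
    have hdet : F.det = 1 := by simpa [hlam.ne', sub_eq_zero] using hvol0
    have hs2 : s = 2 * F.det := by simpa [hμ.ne', sub_eq_zero] using hconf0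
    exact ⟨by rw [transpose_mul_self_eq_det_smul_of_sum_sum_sq_eq_two_mul_det F hs2, hdet,
      one_smul], hdet⟩
  · have hs2 : s = 2 := by
      rw [hs, sum_sum_sq_eq_trace_transpose_mul_self, hortho, trace_one]
      simp
    rw [hsplit, hs2, hdet]
    simp
end

section
/- Let μ, λ > 0 and define g(A₁₁, A₁₂, A₂₂) = (μ/2)(A₁₁² + A₁₂² + A₂₂² − 2 − 2 log(A₁₁A₂₂)) + (λ/2)(A₁₁A₂₂ − 1)² for A₁₁, A₂₂ > 0 and A₁₂ ∈ ℝ. Then for each fixed A₁₁ > 0, the minimum of g over A₂₂ > 0 and A₁₂ ∈ ℝ is attained uniquely at A₁₂ = 0 and A₂₂ = A₂₂*(A₁₁) := (λA₁₁ + √(4μ² + 4μλA₁₁² + λ²A₁₁²)) / (2(μ + λA₁₁²)). -/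
/-!
Fix `A₁₁ = a` and write `c = μ + λa²`; then `A₂₂*` is the positive root of
`c x² = λ a x + μ`. Using that relation, the energy difference from `(0, A₂₂*)` splits exactly as
`μ/2 A₁₂² + c/2 (A₂₂ - A₂₂*)² + μ (r - 1 - log r)` with `r = A₂₂ / A₂₂*`,
and every term is nonnegative because `log r ≤ r - 1`. So `(0, A₂₂*)` is the minimum, and
equality forces both squares to vanish.
-/

open Real

noncomputable def neoHookeanUpperTri (μ lam a₁₁ a₁₂ a₂₂ : ℝ) : ℝ :=
  μ / 2 * (a₁₁ ^ 2 + a₁₂ ^ 2 + a₂₂ ^ 2 - 2 - 2 * log (a₁₁ * a₂₂)) + lam / 2 * (a₁₁ * a₂₂ - 1) ^ 2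

lemma mul_sq_eq_of_eq_quadratic_root {a b c x : ℝ} (ha : a ≠ 0) (hd : 0 ≤ b ^ 2 + 4 * a * c)
    (hx : x = (b + √(b ^ 2 + 4 * a * c)) / (2 * a)) : a * x ^ 2 = b * x + c := by
  have hdiscrim : discrim a (-b) (-c) = √(b ^ 2 + 4 * a * c) * √(b ^ 2 + 4 * a * c) := by
    rw [mul_self_sqrt hd, discrim]; ring
  have := (quadratic_eq_zero_iff ha hdiscrim x).mpr (Or.inl (by rw [hx, neg_neg]))
  linear_combination this

section
variable {μ lam a s t x : ℝ}

lemma neoHookeanUpperTri_sub_eq (ha : 0 < a) (hx : 0 < x) (ht : 0 < t)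
    (hroot : (μ + lam * a ^ 2) * x ^ 2 = lam * a * x + μ) :
    neoHookeanUpperTri μ lam a s t - neoHookeanUpperTri μ lam a 0 x =
      μ / 2 * s ^ 2 + (μ + lam * a ^ 2) / 2 * (t - x) ^ 2 + μ * (t / x - 1 - log (t / x)) := by
  have hlog : log (a * t) - log (a * x) = log (t / x) := by
    rw [← log_div (by positivity) (by positivity), mul_div_mul_left _ _ ha.ne']
  have hquot : μ * (t / x - 1) = ((μ + lam * a ^ 2) * x - lam * a) * (t - x) := by
    field_simp
    linear_combination (x - t) * hroot
  unfold neoHookeanUpperTri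
  linear_combination -μ * hlog - hquot

lemma neoHookeanUpperTri_add_le (hμ : 0 ≤ μ) (ha : 0 < a) (hx : 0 < x) (ht : 0 < t)
    (hroot : (μ + lam * a ^ 2) * x ^ 2 = lam * a * x + μ) :
    neoHookeanUpperTri μ lam a 0 x + (μ / 2 * s ^ 2 + (μ + lam * a ^ 2) / 2 * (t - x) ^ 2) ≤
      neoHookeanUpperTri μ lam a s t := by
  have hgap : 0 ≤ μ * (t / x - 1 - log (t / x)) :=
    mul_nonneg hμ (sub_nonneg.mpr (log_le_sub_one_of_pos (by positivity)))
  linarith [neoHookeanUpperTri_sub_eq (s := s) ha hx ht hroot]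

end

/-- For the 2D neo-Hookean energy evaluated at the upper-triangular matrix
with entries `(A₁₁, A₁₂; 0, A₂₂)`, the minimum over `A₂₂ > 0` and `A₁₂ ∈ ℝ`
(for fixed `A₁₁ > 0`) is attained uniquely at `A₁₂ = 0` and
`A₂₂ = A₂₂*(A₁₁) = (λA₁₁ + √(4μ² + 4μλA₁₁² + λ²A₁₁²)) / (2(μ + λA₁₁²))`. -/
theorem neoHookean2D_unique_minimizer
    (μ lam : ℝ) (hμ : 0 < μ) (hlam : 0 < lam)
    (g : ℝ → ℝ → ℝ → ℝ)
    (hg : ∀ A₁₁ A₁₂ A₂₂, g A₁₁ A₁₂ A₂₂ =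
      μ / 2 * (A₁₁ ^ 2 + A₁₂ ^ 2 + A₂₂ ^ 2 - 2 - 2 * Real.log (A₁₁ * A₂₂)) +
        lam / 2 * (A₁₁ * A₂₂ - 1) ^ 2)
    (A₁₁ : ℝ) (hA₁₁ : 0 < A₁₁)
    (Astar : ℝ)
    (hAstar : Astar = (lam * A₁₁ + Real.sqrt (4 * μ ^ 2 + 4 * μ * lam * A₁₁ ^ 2 +
      lam ^ 2 * A₁₁ ^ 2)) / (2 * (μ + lam * A₁₁ ^ 2))) :
    (∀ A₁₂ A₂₂ : ℝ, 0 < A₂₂ → g A₁₁ 0 Astar ≤ g A₁₁ A₁₂ A₂₂) ∧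
      (∀ A₁₂ A₂₂ : ℝ, 0 < A₂₂ → g A₁₁ A₁₂ A₂₂ = g A₁₁ 0 Astar →
        A₁₂ = 0 ∧ A₂₂ = Astar) := by
  have hE : ∀ s t, g A₁₁ s t = neoHookeanUpperTri μ lam A₁₁ s t := hg A₁₁
  have hc : 0 < μ + lam * A₁₁ ^ 2 := by positivity
  have hpos : 0 < Astar := by rw [hAstar]; positivity
  have hroot : (μ + lam * A₁₁ ^ 2) * Astar ^ 2 = lam * A₁₁ * Astar + μ := by
    refine mul_sq_eq_of_eq_quadratic_root hc.ne' (by positivity) ?_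
    rw [hAstar]; ring_nf
  have hbound s t (ht : 0 < t) := neoHookeanUpperTri_add_le (s := s) hμ.le hA₁₁ hpos ht hroot
  refine ⟨fun s t ht => ?_, fun s t ht heq => ?_⟩
  · rw [hE, hE]
    linarith [hbound s t ht, show 0 ≤ μ / 2 * s ^ 2 + (μ + lam * A₁₁ ^ 2) / 2 * (t - Astar) ^ 2
      by positivity]
  · rw [hE, hE] at heq
    have hs : μ / 2 * s ^ 2 = 0 ∧ (μ + lam * A₁₁ ^ 2) / 2 * (t - Astar) ^ 2 = 0 :=
      (add_eq_zero_iff_of_nonneg (by positivity) (by positivity)).mp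
        (le_antisymm (by linarith [hbound s t ht]) (by positivity))
    simp only [mul_eq_zero, pow_eq_zero_iff two_ne_zero, sub_eq_zero] at hs
    exact ⟨hs.1.resolve_left (by positivity), hs.2.resolve_left (by positivity)⟩
end

section
/- Let μ, λ > 0 and define A₂₂*(A₁₁) = (λA₁₁ + √(4μ² + 4μλA₁₁² + λ²A₁₁²)) / (2(μ + λA₁₁²)) for A₁₁ > 0. Then A₂₂*(A₁₁) > 1 if and only if A₁₁ < 1. In particular A₂₂*(1) = 1. -/
/-!
For fixed `A₁₁ = a`, `A₂₂*(a)` is the positive root of the quadratic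
`q(t) = (μ + λa²) t² - λa t - μ`, whose other root is `≤ 0`. Hence for `t > 0` we have
`t < A₂₂*(a)` iff `q(t) < 0`, and `q(1) = λa(a - 1)` is negative exactly when `a < 1`.
-/

open Real

theorem lt_quadratic_root_iff {p b c t : ℝ} (hp : 0 < p) (hc : 0 ≤ c) (ht : 0 < t) :
    t < (b + √(b ^ 2 + 4 * p * c)) / (2 * p) ↔ p * t ^ 2 - b * t - c < 0 := by
  rw [lt_div_iff₀ (by positivity), ← sub_lt_iff_lt_add']
  rcases lt_or_ge (t * (2 * p) - b) 0 with hneg | hnonneg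
  · have hq : p * t ^ 2 - b * t - c < 0 := by nlinarith [mul_pos hp ht]
    exact iff_of_true (hneg.trans_le (sqrt_nonneg _)) hq
  · rw [lt_sqrt hnonneg]
    constructor <;> intro h <;> nlinarith

/-- For `μ, λ > 0` and `A₁₁ > 0`, the minimizer
`A₂₂*(A₁₁) = (λA₁₁ + √(4μ² + 4μλA₁₁² + λ²A₁₁²)) / (2(μ + λA₁₁²))`
satisfies `A₂₂*(A₁₁) > 1` iff `A₁₁ < 1`; in particular `A₂₂*(1) = 1`. -/
theorem A22star_gt_one_iff
    (μ lam : ℝ) (hμ : 0 < μ) (hlam : 0 < lam)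
    (Astar : ℝ → ℝ)
    (hAstar : ∀ A₁₁ : ℝ, Astar A₁₁ = (lam * A₁₁ + Real.sqrt (4 * μ ^ 2 +
      4 * μ * lam * A₁₁ ^ 2 + lam ^ 2 * A₁₁ ^ 2)) / (2 * (μ + lam * A₁₁ ^ 2))) :
    (∀ A₁₁ : ℝ, 0 < A₁₁ → (1 < Astar A₁₁ ↔ A₁₁ < 1)) ∧ Astar 1 = 1 := by
  constructor
  · intro a ha
    have hdisc : 4 * μ ^ 2 + 4 * μ * lam * a ^ 2 + lam ^ 2 * a ^ 2
        = (lam * a) ^ 2 + 4 * (μ + lam * a ^ 2) * μ := by ring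
    rw [hAstar, hdisc, lt_quadratic_root_iff (by positivity) hμ.le one_pos]
    have hq : (μ + lam * a ^ 2) * 1 ^ 2 - lam * a * 1 - μ = lam * a * (a - 1) := by ring
    rw [hq, ← mul_zero (lam * a), mul_lt_mul_iff_of_pos_left (mul_pos hlam ha), sub_neg]
  · have hsqrt : √(4 * μ ^ 2 + 4 * μ * lam * 1 ^ 2 + lam ^ 2 * 1 ^ 2) = 2 * μ + lam := by
      rw [← sqrt_sq (by positivity : 0 ≤ 2 * μ + lam)]
      ring_nf
    rw [hAstar, hsqrt, div_eq_one_iff_eq (by positivity)]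
    ring
end

section
/- Let W(F) = a|F|² + b|cof F|² + h(det F) for 3×3 matrices F with positive determinant, where a, b > 0 and h: (0,∞) → ℝ is any function. Then for any orthonormal basis {t₁, t₂, n} and the upper-triangular parametrization A(A_nn, A_{t₁t₁}, A_{t₂t₂}, A_{t₁n}, A_{t₂n}, A_{t₁t₂}), the function (A_nn, A_{t₁n}, A_{t₂n}, ...) ↦ W(A) satisfies ∂²W/(∂A_nn ∂A_{t₁n}) = 0 and ∂²W/(∂A_nn ∂A_{t₂n}) = 0 at every point (assuming h is twice differentiable). -/
/-!
Writing `P` for the orthogonal matrix with rows `t₁, t₂, n`, the parametrized matrix is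
`Pᵀ T P` with `T` upper triangular with diagonal `(A_{t₁t₁}, A_{t₂t₂}, A_nn)`. The energy is
isotropic (`|F|`, `|cof F|` and `det F` are invariant under `F ↦ Pᵀ F P`), so it equals the
energy of `T`, an explicit polynomial in the entries plus `h (A_{t₁t₁} A_{t₂t₂} A_nn)`. In it,
`A_nn` never multiplies `A_{t₁n}` or `A_{t₂n}`: the energy is a sum of a function of `A_nn` and a
function of `A_{tₖn}`, so the mixed partials vanish.
-/

open Matrix

section Isotropy

variable {n R : Type*} [Fintype n] [CommRing R]

lemma Matrix.sum_sq_apply_eq_trace_mul_transpose {m : Type*} (C : Matrix m n R) [Fintype m] :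
    ∑ i, ∑ j, C i j ^ 2 = trace (C * Cᵀ) := by
  simp [trace, mul_apply, sq]

lemma Matrix.sum_sq_transpose_apply (C : Matrix n n R) :
    ∑ i, ∑ j, Cᵀ i j ^ 2 = ∑ i, ∑ j, C i j ^ 2 := by
  simp only [transpose_apply]
  exact Finset.sum_comm

variable [DecidableEq n] {B : Matrix n n R}

lemma Matrix.sum_sq_conj_of_mul_transpose_eq_one (hB : B * Bᵀ = 1) (A : Matrix n n R) :
    ∑ i, ∑ j, (Bᵀ * A * B) i j ^ 2 = ∑ i, ∑ j, A i j ^ 2 := by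
  have hBA : B * (Bᵀ * (Aᵀ * B)) = Aᵀ * B := by rw [← Matrix.mul_assoc, hB, Matrix.one_mul]
  rw [sum_sq_apply_eq_trace_mul_transpose, sum_sq_apply_eq_trace_mul_transpose]
  calc trace (Bᵀ * A * B * (Bᵀ * A * B)ᵀ) = trace (Bᵀ * (A * Aᵀ) * B) := by
        simp only [transpose_mul, transpose_transpose, Matrix.mul_assoc, hBA]
    _ = trace (A * Aᵀ) := by rw [trace_mul_comm, ← Matrix.mul_assoc, hB, Matrix.one_mul]

lemma Matrix.det_mul_self_of_mul_transpose_eq_one (hB : B * Bᵀ = 1) : B.det * B.det = 1 := by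
  simpa only [det_mul, det_transpose, det_one] using congrArg det hB

lemma Matrix.det_conj_of_mul_transpose_eq_one (hB : B * Bᵀ = 1) (A : Matrix n n R) :
    (Bᵀ * A * B).det = A.det := by
  rw [det_mul, det_mul, det_transpose]
  linear_combination A.det * det_mul_self_of_mul_transpose_eq_one hB

lemma Matrix.adjugate_eq_det_smul_transpose_of_mul_transpose_eq_one (hB : B * Bᵀ = 1) : adjugate B = B.det • Bᵀ := by
  calc adjugate B = Bᵀ * (B * adjugate B) := by
        rw [← Matrix.mul_assoc, mul_eq_one_comm.mp hB, Matrix.one_mul]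
    _ = B.det • Bᵀ := by rw [mul_adjugate, Matrix.mul_smul, Matrix.mul_one]

lemma Matrix.adjugate_conj_of_mul_transpose_eq_one (hB : B * Bᵀ = 1) (A : Matrix n n R) :
    adjugate (Bᵀ * A * B) = Bᵀ * adjugate A * B := by
  have hBt : Bᵀ * Bᵀᵀ = 1 := by rw [transpose_transpose]; exact mul_eq_one_comm.mp hB
  have hadjBt := adjugate_eq_det_smul_transpose_of_mul_transpose_eq_one hBt
  rw [det_transpose, transpose_transpose] at hadjBt
  rw [adjugate_mul_distrib, adjugate_mul_distrib, adjugate_eq_det_smul_transpose_of_mul_transpose_eq_one hB, hadjBt]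
  simp only [Matrix.smul_mul, Matrix.mul_smul, smul_smul, Matrix.mul_assoc,
    det_mul_self_of_mul_transpose_eq_one hB, one_smul]

def mooneyRivlinEnergy (a b : R) (h : R → R) (F : Matrix n n R) : R :=
  a * (∑ i, ∑ j, F i j ^ 2) + b * (∑ i, ∑ j, (adjugate F)ᵀ i j ^ 2) + h F.det

lemma mooneyRivlinEnergy_conj_of_mul_transpose_eq_one (hB : B * Bᵀ = 1) (a b : R) (h : R → R)
    (A : Matrix n n R) : mooneyRivlinEnergy a b h (Bᵀ * A * B) = mooneyRivlinEnergy a b h A := by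
  simp only [mooneyRivlinEnergy, sum_sq_transpose_apply, adjugate_conj_of_mul_transpose_eq_one hB,
    sum_sq_conj_of_mul_transpose_eq_one hB, det_conj_of_mul_transpose_eq_one hB]

end Isotropy

lemma mooneyRivlinEnergy_upperTriangular {R : Type*} [CommRing R] (a b : R) (h : R → R)
    (d₁ d₂ x p q r : R) :
    mooneyRivlinEnergy a b h !![d₁, p, q; 0, d₂, r; 0, 0, x] =
      a * (d₁ ^ 2 + d₂ ^ 2 + x ^ 2 + p ^ 2 + q ^ 2 + r ^ 2) +
      b * ((d₂ * x) ^ 2 + (d₁ * x) ^ 2 + (d₁ * d₂) ^ 2 + (p * x) ^ 2 + (d₁ * r) ^ 2 +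
        (p * r - q * d₂) ^ 2) + h (d₁ * d₂ * x) := by
  simp only [mooneyRivlinEnergy, adjugate_fin_three, det_fin_three, Fin.sum_univ_three,
    transpose_apply, of_apply, cons_val', cons_val_fin_one, cons_val_zero, cons_val_one, cons_val,
    mul_zero, zero_mul, sub_zero, add_zero]
  ring

lemma of_orthonormal_mul_transpose_eq_one {R : Type*} [CommRing R] {t₁ t₂ t₃ : Fin 3 → R}
    (h₁ : t₁ ⬝ᵥ t₁ = 1) (h₂ : t₂ ⬝ᵥ t₂ = 1) (h₃ : t₃ ⬝ᵥ t₃ = 1)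
    (h₁₂ : t₁ ⬝ᵥ t₂ = 0) (h₁₃ : t₁ ⬝ᵥ t₃ = 0) (h₂₃ : t₂ ⬝ᵥ t₃ = 0) :
    of ![t₁, t₂, t₃] * (of ![t₁, t₂, t₃])ᵀ = 1 := by
  ext i j
  change ![t₁, t₂, t₃] i ⬝ᵥ ![t₁, t₂, t₃] j = (1 : Matrix (Fin 3) (Fin 3) R) i j
  fin_cases i <;> fin_cases j <;>
    simp [dotProduct_comm, h₁, h₂, h₃, h₁₂, h₁₃, h₂₃]

lemma frame_expansion_eq_conj {R : Type*} [CommRing R] (t₁ t₂ t₃ : Fin 3 → R)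
    (d₁ d₂ x p q r : R) :
    x • vecMulVec t₃ t₃ + d₁ • vecMulVec t₁ t₁ + d₂ • vecMulVec t₂ t₂ +
        q • vecMulVec t₁ t₃ + r • vecMulVec t₂ t₃ + p • vecMulVec t₁ t₂ =
      (of ![t₁, t₂, t₃])ᵀ * !![d₁, p, q; 0, d₂, r; 0, 0, x] * of ![t₁, t₂, t₃] := by
  ext i j
  simp only [Matrix.add_apply, Matrix.smul_apply, vecMulVec_apply, smul_eq_mul, mul_apply, transpose_apply,
    of_apply, cons_val', cons_val_fin_one, Fin.sum_univ_three, cons_val_zero, cons_val_one, cons_val]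
  ring

lemma mooneyRivlinEnergy_frame_expansion {R : Type*} [CommRing R] (a b : R) (h : R → R)
    {t₁ t₂ t₃ : Fin 3 → R} (h₁ : t₁ ⬝ᵥ t₁ = 1) (h₂ : t₂ ⬝ᵥ t₂ = 1) (h₃ : t₃ ⬝ᵥ t₃ = 1)
    (h₁₂ : t₁ ⬝ᵥ t₂ = 0) (h₁₃ : t₁ ⬝ᵥ t₃ = 0) (h₂₃ : t₂ ⬝ᵥ t₃ = 0) (d₁ d₂ x p q r : R) :
    mooneyRivlinEnergy a b h (x • vecMulVec t₃ t₃ + d₁ • vecMulVec t₁ t₁ + d₂ • vecMulVec t₂ t₂ +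
        q • vecMulVec t₁ t₃ + r • vecMulVec t₂ t₃ + p • vecMulVec t₁ t₂) =
      a * (d₁ ^ 2 + d₂ ^ 2 + x ^ 2 + p ^ 2 + q ^ 2 + r ^ 2) +
      b * ((d₂ * x) ^ 2 + (d₁ * x) ^ 2 + (d₁ * d₂) ^ 2 + (p * x) ^ 2 + (d₁ * r) ^ 2 +
        (p * r - q * d₂) ^ 2) + h (d₁ * d₂ * x) := by
  rw [frame_expansion_eq_conj, mooneyRivlinEnergy_conj_of_mul_transpose_eq_one
    (of_orthonormal_mul_transpose_eq_one h₁ h₂ h₃ h₁₂ h₁₃ h₂₃), mooneyRivlinEnergy_upperTriangular]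

lemma deriv_deriv_eq_zero_of_add_add {𝕜 E : Type*} [NontriviallyNormedField 𝕜]
    [NormedAddCommGroup E] [NormedSpace 𝕜 E] {F : 𝕜 → 𝕜 → E}
    (hF : ∀ x x' y y', F x y + F x' y' = F x y' + F x' y) (x₀ y₀ : 𝕜) :
    deriv (fun x => deriv (fun y => F x y) y₀) x₀ = 0 := by
  have hsplit (x : 𝕜) : (fun y => F x y) = fun y => F 0 y + (F x 0 - F 0 0) := by
    funext y
    rw [add_sub, eq_sub_iff_add_eq, hF x 0 y 0, add_comm]
  have hinner : (fun x => deriv (fun y => F x y) y₀) = fun _ => deriv (fun y => F 0 y) y₀ := by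
    funext x
    rw [hsplit x, deriv_add_const]
  rw [hinner, deriv_const]

theorem mooneyRivlin_mixed_partials_vanish_general
    (a b : ℝ)
    (h : ℝ → ℝ)
    (t₁ t₂ n : Fin 3 → ℝ)
    (ht₁ : t₁ ⬝ᵥ t₁ = 1) (ht₂ : t₂ ⬝ᵥ t₂ = 1) (hn : n ⬝ᵥ n = 1)
    (ht₁t₂ : t₁ ⬝ᵥ t₂ = 0) (ht₁n : t₁ ⬝ᵥ n = 0) (ht₂n : t₂ ⬝ᵥ n = 0)
    (W : Matrix (Fin 3) (Fin 3) ℝ → ℝ)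
    (hW : ∀ M, W M = a * (∑ i, ∑ j, (M i j) ^ 2) +
      b * (∑ i, ∑ j, (((Matrix.adjugate M)ᵀ) i j) ^ 2) + h M.det) :
    ∀ Ann At₁t₁ At₂t₂ At₁n At₂n At₁t₂ : ℝ,
      0 < Ann → 0 < At₁t₁ → 0 < At₂t₂ →
      deriv (fun x => deriv (fun y =>
        W (x • vecMulVec n n + At₁t₁ • vecMulVec t₁ t₁ + At₂t₂ • vecMulVec t₂ t₂ +
            y • vecMulVec t₁ n + At₂n • vecMulVec t₂ n + At₁t₂ • vecMulVec t₁ t₂)) At₁n)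
        Ann = 0 ∧
      deriv (fun x => deriv (fun y =>
        W (x • vecMulVec n n + At₁t₁ • vecMulVec t₁ t₁ + At₂t₂ • vecMulVec t₂ t₂ +
            At₁n • vecMulVec t₁ n + y • vecMulVec t₂ n + At₁t₂ • vecMulVec t₁ t₂)) At₂n)
        Ann = 0 := by
  obtain rfl : W = mooneyRivlinEnergy a b h := funext hW
  have hEnergy := mooneyRivlinEnergy_frame_expansion a b h ht₁ ht₂ hn ht₁t₂ ht₁n ht₂n
  intro Ann At₁t₁ At₂t₂ At₁n At₂n At₁t₂ _ _ _
  constructor <;> apply deriv_deriv_eq_zero_of_add_add <;> intros <;> simp only [hEnergy] <;> ring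

/-- For the Mooney–Rivlin type energy `W(F) = a|F|² + b|cof F|² + h(det F)` (with
`a, b > 0` and `h` twice differentiable), in the upper-triangular parametrization
with respect to an orthonormal basis `{t₁, t₂, n}`, the mixed second partial
derivatives `∂²W/(∂A_nn ∂A_{t₁n})` and `∂²W/(∂A_nn ∂A_{t₂n})` vanish. -/
theorem mooneyRivlin_mixed_partials_vanish
    (a b : ℝ) (ha : 0 < a) (hb : 0 < b)
    (h : ℝ → ℝ) (hh : ContDiff ℝ 2 h)
    (t₁ t₂ n : Fin 3 → ℝ)
    (ht₁ : t₁ ⬝ᵥ t₁ = 1) (ht₂ : t₂ ⬝ᵥ t₂ = 1) (hn : n ⬝ᵥ n = 1)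
    (ht₁t₂ : t₁ ⬝ᵥ t₂ = 0) (ht₁n : t₁ ⬝ᵥ n = 0) (ht₂n : t₂ ⬝ᵥ n = 0)
    (W : Matrix (Fin 3) (Fin 3) ℝ → ℝ)
    (hW : ∀ M, W M = a * (∑ i, ∑ j, (M i j) ^ 2) +
      b * (∑ i, ∑ j, (((Matrix.adjugate M)ᵀ) i j) ^ 2) + h M.det) :
    ∀ Ann At₁t₁ At₂t₂ At₁n At₂n At₁t₂ : ℝ,
      0 < Ann → 0 < At₁t₁ → 0 < At₂t₂ →
      deriv (fun x => deriv (fun y =>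
        W (x • vecMulVec n n + At₁t₁ • vecMulVec t₁ t₁ + At₂t₂ • vecMulVec t₂ t₂ +
            y • vecMulVec t₁ n + At₂n • vecMulVec t₂ n + At₁t₂ • vecMulVec t₁ t₂)) At₁n)
        Ann = 0 ∧
      deriv (fun x => deriv (fun y =>
        W (x • vecMulVec n n + At₁t₁ • vecMulVec t₁ t₁ + At₂t₂ • vecMulVec t₂ t₂ +
            At₁n • vecMulVec t₁ n + y • vecMulVec t₂ n + At₁t₂ • vecMulVec t₁ t₂)) At₂n)
        Ann = 0 :=
  mooneyRivlin_mixed_partials_vanish_general a b h t₁ t₂ n ht₁ ht₂ hn ht₁t₂ ht₁n ht₂n W hW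
end

section
/- Let λ, μ > 0 and define W_lin(ε) on symmetric 2×2 matrices as in the isotropic linearized damaged energy: W_lin(ε) = (1/2)(λ + 2μ − λ²/(λ+2μ)) ε₁₁² when ε₂₂ ≥ −(λ/(λ+2μ)) ε₁₁, and W_lin(ε) = ((λ+2μ)/2)(ε₁₁² + ε₂₂²) + λ ε₁₁ε₂₂ when ε₂₂ ≤ −(λ/(λ+2μ)) ε₁₁. Then 0 ≤ W_lin(ε) ≤ (1/2)(2μ|ε|² + λ(tr ε)²) for every symmetric ε, i.e., the effective damaged energy is nonnegative and bounded above by the intact elastic energy. -/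
/-!
With `a = λ + 2μ` and `M = a - λ²/a = 4μ(λ+μ)/a`, the intact energy splits into nonnegative parts,
`½(2μ|ε|² + λ(tr ε)²) = ½ M ε₁₁² + (a ε₂₂ + λ ε₁₁)²/(2a) + 2μ ε₁₂²`.
The first branch of `W_lin` keeps only the first part, the second branch the first two.
-/

lemma sub_sq_div_self_eq (lam μ : ℝ) (ha : lam + 2 * μ ≠ 0) :
    lam + 2 * μ - lam ^ 2 / (lam + 2 * μ) = 4 * μ * (lam + μ) / (lam + 2 * μ) := by
  field_simp
  ring

lemma sub_sq_div_self_nonneg {lam μ : ℝ} (hlam : 0 < lam) (hμ : 0 < μ) :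
    0 ≤ lam + 2 * μ - lam ^ 2 / (lam + 2 * μ) := by
  rw [sub_sq_div_self_eq lam μ (by positivity)]
  positivity

lemma compressed_energy_eq (lam μ x y : ℝ) (ha : lam + 2 * μ ≠ 0) :
    (lam + 2 * μ) / 2 * (x ^ 2 + y ^ 2) + lam * x * y =
      1 / 2 * (lam + 2 * μ - lam ^ 2 / (lam + 2 * μ)) * x ^ 2 +
        ((lam + 2 * μ) * y + lam * x) ^ 2 / (2 * (lam + 2 * μ)) := by
  field_simp
  ring

lemma intact_energy_eq (lam μ x w y : ℝ) :
    1 / 2 * (2 * μ * (x ^ 2 + 2 * w ^ 2 + y ^ 2) + lam * (x + y) ^ 2) =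
      (lam + 2 * μ) / 2 * (x ^ 2 + y ^ 2) + lam * x * y + 2 * μ * w ^ 2 := by
  ring

/-- The isotropic linearized damaged energy is nonnegative and bounded above by
the intact linear elastic energy `(1/2)(2μ|ε|² + λ(tr ε)²)`, for every symmetric
strain `ε = (ε₁₁, ε₁₂, ε₂₂)`. -/
theorem Wlin_between_zero_and_intact
    (lam μ : ℝ) (hlam : 0 < lam) (hμ : 0 < μ) :
    ∀ ε₁₁ ε₁₂ ε₂₂ W : ℝ,
      ((ε₂₂ ≥ -(lam / (lam + 2 * μ)) * ε₁₁ ∧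
          W = 1 / 2 * (lam + 2 * μ - lam ^ 2 / (lam + 2 * μ)) * ε₁₁ ^ 2) ∨
        (ε₂₂ ≤ -(lam / (lam + 2 * μ)) * ε₁₁ ∧
          W = (lam + 2 * μ) / 2 * (ε₁₁ ^ 2 + ε₂₂ ^ 2) + lam * ε₁₁ * ε₂₂)) →
      0 ≤ W ∧ W ≤ 1 / 2 * (2 * μ * (ε₁₁ ^ 2 + 2 * ε₁₂ ^ 2 + ε₂₂ ^ 2) +
        lam * (ε₁₁ + ε₂₂) ^ 2) := by
  intro x w y W hW
  have ha : 0 < lam + 2 * μ := by positivity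
  have hplane : 0 ≤ 1 / 2 * (lam + 2 * μ - lam ^ 2 / (lam + 2 * μ)) * x ^ 2 :=
    mul_nonneg (mul_nonneg one_half_pos.le (sub_sq_div_self_nonneg hlam hμ)) (sq_nonneg x)
  have hvol : 0 ≤ ((lam + 2 * μ) * y + lam * x) ^ 2 / (2 * (lam + 2 * μ)) := by positivity
  have hshear : 0 ≤ 2 * μ * w ^ 2 := by positivity
  rw [intact_energy_eq, compressed_energy_eq lam μ x y ha.ne']
  rcases hW with ⟨-, rfl⟩ | ⟨-, rfl⟩
  · exact ⟨hplane, by linarith⟩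
  · rw [compressed_energy_eq lam μ x y ha.ne']
    exact ⟨by linarith, by linarith⟩
end

section
/- Let λ, μ > 0 and W_lin(ε) be the isotropic linearized damaged energy with crack normal e₂ (as defined by the two branches above). Then ∂W_lin/∂ε₁₂ = 0 everywhere, and ∂W_lin/∂ε₂₂ = min{λε₁₁ + (λ+2μ)ε₂₂, 0}; that is, the normal traction on the crack plane is zero when the crack opens and equals the intact-material normal stress when the crack closes. -/
/-! Write `k = λ + 2μ > 0`. Completing the square in `ε₂₂` shows that both branches of `W` equal
`(k - λ²/k) ε₁₁² / 2 + min (λ ε₁₁ + k ε₂₂) 0 ² / (2k)`, the branch condition being the sign of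
`λ ε₁₁ + k ε₂₂`. Hence `W` does not depend on `ε₁₂`, and since `y ↦ min y 0 ²` is `C¹` with
derivative `2 min y 0`, the chain rule gives `∂W/∂ε₂₂ = min (λ ε₁₁ + k ε₂₂) 0`. -/

open Set Filter Topology

lemma hasDerivAt_min_zero_sq (x : ℝ) : HasDerivAt (fun y : ℝ => min y 0 ^ 2) (2 * min x 0) x := by
  rcases lt_trichotomy x 0 with hx | rfl | hx
  · have hf : (fun y : ℝ => min y 0 ^ 2) =ᶠ[𝓝 x] fun y => y ^ 2 := by
      filter_upwards [Iio_mem_nhds hx] with y hy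
      rw [min_eq_left hy.le]
    rw [min_eq_left hx.le]
    simpa using (hasDerivAt_pow 2 x).congr_of_eventuallyEq hf
  · have hleft : HasDerivWithinAt (fun y : ℝ => min y 0 ^ 2) 0 (Iic 0) 0 := by
      have h := (hasDerivAt_pow 2 (0 : ℝ)).hasDerivWithinAt (s := Iic 0)
      norm_num at h
      exact h.congr (fun y hy => by rw [min_eq_left hy]) (by simp)
    have hright : HasDerivWithinAt (fun y : ℝ => min y 0 ^ 2) 0 (Ici 0) 0 :=
      (hasDerivWithinAt_const 0 _ 0).congr
        (fun y hy => by simp [min_eq_right (mem_Ici.1 hy)]) (by simp)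
    simpa [Iic_union_Ici, hasDerivWithinAt_univ] using hleft.union hright
  · have hf : (fun y : ℝ => min y 0 ^ 2) =ᶠ[𝓝 x] fun _ => 0 := by
      filter_upwards [Ioi_mem_nhds hx] with y hy
      simp [min_eq_right (mem_Ioi.1 hy).le]
    rw [min_eq_right hx.le, mul_zero]
    exact (hasDerivAt_const x 0).congr_of_eventuallyEq hf

lemma neg_div_mul_lt_iff_pos {lam k a d : ℝ} (hk : 0 < k) :
    -(lam / k) * a < d ↔ 0 < lam * a + k * d := by
  have h : lam * a + k * d = k * (d - -(lam / k) * a) := by field_simp; ring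
  rw [h, mul_pos_iff_of_pos_left hk, sub_pos]

lemma ite_quadratic_eq_add_min_sq {lam k : ℝ} (hk : 0 < k) (a d : ℝ) :
    (if d > -(lam / k) * a then 1 / 2 * (k - lam ^ 2 / k) * a ^ 2
      else k / 2 * a ^ 2 + lam * a * d + k / 2 * d ^ 2) =
      1 / 2 * (k - lam ^ 2 / k) * a ^ 2 + min (lam * a + k * d) 0 ^ 2 / (2 * k) := by
  split_ifs with hd
  · rw [min_eq_right ((neg_div_mul_lt_iff_pos hk).1 hd).le]
    ring
  · rw [min_eq_left (not_lt.1 (mt (neg_div_mul_lt_iff_pos hk).2 hd))]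
    field_simp
    ring

lemma hasDerivAt_add_min_sq {lam k : ℝ} (hk : k ≠ 0) (a c d : ℝ) :
    HasDerivAt (fun x => c + min (lam * a + k * x) 0 ^ 2 / (2 * k))
      (min (lam * a + k * d) 0) d := by
  have h : HasDerivAt (fun x => c + min (lam * a + k * x) 0 ^ 2 / (2 * k))
      (2 * min (lam * a + k * d) 0 * (k * 1) / (2 * k)) d :=
    (((hasDerivAt_min_zero_sq _).comp d
      (((hasDerivAt_id' d).const_mul k).const_add (lam * a))).div_const _).const_add c
  rwa [mul_one, mul_div_mul_comm, div_self hk, mul_one, mul_div_cancel_left₀ _ two_ne_zero] at h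

/-- For the isotropic linearized damaged energy `W(ε₁₁, ε₁₂, ε₂₂)` with crack
normal `e₂`, the shear stress `∂W/∂ε₁₂` vanishes everywhere and the normal
stress is `∂W/∂ε₂₂ = min{λε₁₁ + (λ+2μ)ε₂₂, 0}`. -/
theorem Wlin_tractions
    (lam μ : ℝ) (hlam : 0 < lam) (hμ : 0 < μ)
    (W : ℝ → ℝ → ℝ → ℝ)
    (hW : ∀ a b d : ℝ, W a b d =
      if d > -(lam / (lam + 2 * μ)) * a then
        1 / 2 * (lam + 2 * μ - lam ^ 2 / (lam + 2 * μ)) * a ^ 2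
      else
        (lam + 2 * μ) / 2 * a ^ 2 + lam * a * d + (lam + 2 * μ) / 2 * d ^ 2) :
    ∀ a b d : ℝ,
      deriv (fun x => W a x d) b = 0 ∧
      deriv (fun x => W a b x) d = min (lam * a + (lam + 2 * μ) * d) 0 := by
  intro a b d
  have hk : 0 < lam + 2 * μ := by positivity
  refine ⟨by simp only [hW, deriv_const], ?_⟩
  have hclosed : (fun x => W a b x) = fun x =>
      1 / 2 * (lam + 2 * μ - lam ^ 2 / (lam + 2 * μ)) * a ^ 2
        + min (lam * a + (lam + 2 * μ) * x) 0 ^ 2 / (2 * (lam + 2 * μ)) :=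
    funext fun x => (hW a b x).trans (ite_quadratic_eq_add_min_sq hk a x)
  rw [hclosed, (hasDerivAt_add_min_sq hk.ne' a _ d).deriv]
end

section
/- Let μ₁, μ₂, λ̄ > 0 and p, q ≥ 1, and for fixed A₁₁, A₂₂ > 0 and A₁₂ ∈ ℝ define f(A₃₃) = (μ₁/p)((A₁₁² + A₂₂² + A₃₃² + A₁₂²)^{p/2} − 3^{p/2} − 3^{p/2−1} p log(A₁₁A₂₂A₃₃)) + (μ₂/q)((A₁₁²A₂₂² + A₁₁²A₃₃² + A₃₃²A₁₂² + A₂₂²A₃₃²)^{q/2} − 3^{q/2} − 2·3^{q/2−1} q log(A₁₁A₂₂A₃₃)) + (λ̄/2)(A₁₁A₂₂A₃₃ − 1)² for A₃₃ > 0. Then f is strictly convex on (0,∞), tends to +∞ as A₃₃ → 0⁺ and as A₃₃ → ∞, and hence has a unique minimizer A₃₃* > 0. -/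
/-!
On `(0, ∞)`, `f x = g x - b log x` with `b > 0` and `g`, up to a constant, a nonnegative
combination of `(c + m x²)^s` (`s ≥ 1/2`) and `(k x - 1)²`. Each `(c + m x²)^s` is convex as the
`2s`-th power of the convex function `√(c + m x²)`, so `-b log` makes `f` strictly convex; it
also forces `f → ∞` at `0⁺`, while the quadratic volumetric term dominates `b log x` at `∞`.
A strictly convex function on `(0, ∞)` that blows up at both ends has exactly one minimizer.
-/

open Filter Topology Set Real

lemma ConvexOn.rpow {E : Type*} [AddCommMonoid E] [Module ℝ E] {s : Set E} {f : E → ℝ} {p : ℝ}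
    (hf : ConvexOn ℝ s f) (hf₀ : ∀ ⦃x⦄, x ∈ s → 0 ≤ f x) (hp : 1 ≤ p) :
    ConvexOn ℝ s fun x => f x ^ p := by
  refine ⟨hf.1, fun x hx y hy a b ha hb hab => ?_⟩
  calc f (a • x + b • y) ^ p ≤ (a • f x + b • f y) ^ p :=
        Real.rpow_le_rpow (hf₀ (hf.1 hx hy ha hb hab)) (hf.2 hx hy ha hb hab) (by linarith)
    _ ≤ a • f x ^ p + b • f y ^ p := (convexOn_rpow hp).2 (hf₀ hx) (hf₀ hy) ha hb hab

lemma StrictConcaveOn.const_mul {E : Type*} [AddCommMonoid E] [Module ℝ E] {s : Set E}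
    {f : E → ℝ} {c : ℝ} (hc : 0 < c) (hf : StrictConcaveOn ℝ s f) :
    StrictConcaveOn ℝ s fun x => c * f x := by
  refine ⟨hf.1, fun x hx y hy hxy a b ha hb hab => ?_⟩
  have := mul_lt_mul_of_pos_left (hf.2 hx hy hxy ha hb hab) hc
  simp only [smul_eq_mul] at this ⊢
  linarith

lemma convexOn_sqrt_add_mul_sq {c m : ℝ} (hc : 0 ≤ c) (hm : 0 ≤ m) :
    ConvexOn ℝ univ fun x : ℝ => √(c + m * x ^ 2) := by
  refine ⟨convex_univ, fun x _ y _ a b ha hb hab => ?_⟩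
  have hu := Real.sq_sqrt (by positivity : 0 ≤ c + m * x ^ 2)
  have hv := Real.sq_sqrt (by positivity : 0 ≤ c + m * y ^ 2)
  -- Cauchy–Schwarz for the vectors `(√c, √m x)` and `(√c, √m y)`
  have hcs : c + m * x * y ≤ √(c + m * x ^ 2) * √(c + m * y ^ 2) := by
    rw [← Real.sqrt_mul (by positivity)]
    refine (le_abs_self _).trans (Real.abs_le_sqrt ?_)
    nlinarith [mul_nonneg (mul_nonneg hc hm) (sq_nonneg (x - y))]
  simp only [smul_eq_mul, Real.sqrt_le_iff]
  refine ⟨by positivity, ?_⟩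
  calc c + m * (a * x + b * y) ^ 2
      = a ^ 2 * (c + m * x ^ 2) + b ^ 2 * (c + m * y ^ 2) + 2 * (a * b) * (c + m * x * y) := by
        linear_combination (-c * (1 + a + b)) * hab
    _ ≤ a ^ 2 * √(c + m * x ^ 2) ^ 2 + b ^ 2 * √(c + m * y ^ 2) ^ 2
          + 2 * (a * b) * (√(c + m * x ^ 2) * √(c + m * y ^ 2)) := by
        rw [hu, hv]; gcongr
    _ = (a * √(c + m * x ^ 2) + b * √(c + m * y ^ 2)) ^ 2 := by ring

lemma convexOn_rpow_add_mul_sq {c m s : ℝ} (hc : 0 ≤ c) (hm : 0 ≤ m) (hs : 1 / 2 ≤ s) :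
    ConvexOn ℝ univ fun x : ℝ => (c + m * x ^ 2) ^ s := by
  refine ((convexOn_sqrt_add_mul_sq hc hm).rpow (fun _ _ => Real.sqrt_nonneg _)
    (by linarith : 1 ≤ 2 * s)).congr fun x _ => ?_
  dsimp only
  rw [Real.sqrt_eq_rpow, ← Real.rpow_mul (by positivity)]
  ring_nf

lemma convexOn_mul_sub_sq (k l : ℝ) : ConvexOn ℝ univ fun x : ℝ => (k * x - l) ^ 2 := by
  have := (even_two.convexOn_pow (𝕜 := ℝ)).comp_affineMap (AffineMap.lineMap (-l) (k - l))
  refine this.congr fun x _ => ?_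
  simp only [Function.comp_apply, AffineMap.lineMap_apply, vsub_eq_sub, sub_neg_eq_add,
    sub_add_cancel, smul_eq_mul, vadd_eq_add]
  ring

lemma ConvexOn.strictConvexOn_sub_mul_log {g : ℝ → ℝ} {b : ℝ} (hg : ConvexOn ℝ (Ioi 0) g)
    (hb : 0 < b) : StrictConvexOn ℝ (Ioi 0) fun x => g x - b * log x :=
  hg.sub_strictConcaveOn (strictConcaveOn_log_Ioi.const_mul hb)

lemma tendsto_sub_mul_log_nhdsGT_zero {g : ℝ → ℝ} {b C : ℝ} (hb : 0 < b) (hg : ∀ x, C ≤ g x) :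
    Tendsto (fun x => g x - b * log x) (𝓝[>] 0) atTop := by
  have h : Tendsto (fun x => C + -b * log x) (𝓝[>] 0) atTop :=
    tendsto_atTop_add_const_left _ C
      (tendsto_log_nhdsGT_zero.const_mul_atBot_of_neg (neg_neg_of_pos hb))
  exact tendsto_atTop_mono (fun x => by linarith [hg x]) h

lemma tendsto_sub_mul_log_atTop {g : ℝ → ℝ} {b : ℝ} (hb : 0 ≤ b)
    (hg : Tendsto (fun x => g x - b * x) atTop atTop) :
    Tendsto (fun x => g x - b * log x) atTop atTop := by
  refine tendsto_atTop_mono' _ ?_ hg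
  filter_upwards [eventually_gt_atTop 0] with x hx
  have := mul_le_mul_of_nonneg_left ((log_le_sub_one_of_pos hx).trans (sub_one_lt x).le) hb
  linarith

lemma tendsto_mul_sq_sub_mul_atTop {a : ℝ} (ha : 0 < a) (d : ℝ) :
    Tendsto (fun x : ℝ => a * x ^ 2 - d * x) atTop atTop :=
  (tendsto_id.atTop_mul_atTop₀ (tendsto_atTop_add_const_right _ (-d)
    (tendsto_id.const_mul_atTop ha))).congr fun x => by simp only [id]; ring

lemma exists_forall_le_Ioi_of_tendsto {f : ℝ → ℝ} (hf : ContinuousOn f (Ioi 0))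
    (h0 : Tendsto f (𝓝[>] 0) atTop) (htop : Tendsto f atTop atTop) :
    ∃ x ∈ Ioi (0 : ℝ), ∀ y ∈ Ioi (0 : ℝ), f x ≤ f y := by
  -- in the variable `log x` both ends of `(0, ∞)` become the cocompact filter of `ℝ`
  have hcont : Continuous (f ∘ exp) := hf.comp_continuous continuous_exp exp_pos
  have hlim : Tendsto (f ∘ exp) (cocompact ℝ) atTop := by
    rw [cocompact_eq_atBot_atTop]
    exact tendsto_sup.2 ⟨h0.comp tendsto_exp_atBot_nhdsGT, htop.comp tendsto_exp_atTop⟩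
  obtain ⟨t, ht⟩ := hcont.exists_forall_le hlim
  refine ⟨exp t, exp_pos t, fun y hy => ?_⟩
  simpa [exp_log hy] using ht (log y)

lemma StrictConvexOn.existsUnique_forall_le_Ioi {f : ℝ → ℝ} (hf : StrictConvexOn ℝ (Ioi 0) f)
    (h0 : Tendsto f (𝓝[>] 0) atTop) (htop : Tendsto f atTop atTop) :
    ∃! x, x ∈ Ioi (0 : ℝ) ∧ ∀ y ∈ Ioi (0 : ℝ), f x ≤ f y := by
  obtain ⟨x, hx, hmin⟩ :=
    exists_forall_le_Ioi_of_tendsto (hf.convexOn.continuousOn isOpen_Ioi) h0 htop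
  exact ⟨x, ⟨hx, hmin⟩, fun y ⟨hy, hymin⟩ =>
    hf.eq_of_isMinOn (isMinOn_iff.2 hymin) (isMinOn_iff.2 hmin) hy hx⟩

/-- For the `(p,q)`-generalized Mooney–Rivlin energy, viewed as a function `f` of
the `(3,3)` entry `A₃₃ > 0` of the upper-triangular matrix (with `A₁₃ = A₂₃ = 0`),
`f` is strictly convex on `(0,∞)`, tends to `+∞` as `A₃₃ → 0⁺` and as
`A₃₃ → ∞`, and has a unique minimizer on `(0,∞)`. -/
theorem pq_energy_unique_minimizer
    (μ₁ μ₂ lamBar p q : ℝ) (hμ₁ : 0 < μ₁) (hμ₂ : 0 < μ₂) (hlam : 0 < lamBar)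
    (hp : 1 ≤ p) (hq : 1 ≤ q)
    (A₁₁ A₂₂ A₁₂ : ℝ) (hA₁₁ : 0 < A₁₁) (hA₂₂ : 0 < A₂₂)
    (f : ℝ → ℝ)
    (hf : ∀ A₃₃ : ℝ, f A₃₃ =
      μ₁ / p * ((A₁₁ ^ 2 + A₂₂ ^ 2 + A₃₃ ^ 2 + A₁₂ ^ 2) ^ (p / 2) -
        (3 : ℝ) ^ (p / 2) - (3 : ℝ) ^ (p / 2 - 1) * p * Real.log (A₁₁ * A₂₂ * A₃₃)) +
      μ₂ / q * ((A₁₁ ^ 2 * A₂₂ ^ 2 + A₁₁ ^ 2 * A₃₃ ^ 2 + A₃₃ ^ 2 * A₁₂ ^ 2 +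
          A₂₂ ^ 2 * A₃₃ ^ 2) ^ (q / 2) -
        (3 : ℝ) ^ (q / 2) - 2 * (3 : ℝ) ^ (q / 2 - 1) * q * Real.log (A₁₁ * A₂₂ * A₃₃)) +
      lamBar / 2 * (A₁₁ * A₂₂ * A₃₃ - 1) ^ 2) :
    StrictConvexOn ℝ (Set.Ioi 0) f ∧
      Tendsto f (𝓝[>] (0 : ℝ)) atTop ∧
      Tendsto f atTop atTop ∧
      ∃! x : ℝ, x ∈ Set.Ioi (0 : ℝ) ∧ ∀ y ∈ Set.Ioi (0 : ℝ), f x ≤ f y := by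
  have hp₀ : p ≠ 0 := by positivity
  have hq₀ : q ≠ 0 := by positivity
  set k := A₁₁ * A₂₂
  set b := μ₁ * 3 ^ (p / 2 - 1) + 2 * μ₂ * 3 ^ (q / 2 - 1)
  set C := -(μ₁ / p * 3 ^ (p / 2)) - μ₂ / q * 3 ^ (q / 2) - b * log k
  set g : ℝ → ℝ := fun x => μ₁ / p * (A₁₁ ^ 2 + A₂₂ ^ 2 + A₁₂ ^ 2 + 1 * x ^ 2) ^ (p / 2)
    + μ₂ / q * (A₁₁ ^ 2 * A₂₂ ^ 2 + (A₁₁ ^ 2 + A₁₂ ^ 2 + A₂₂ ^ 2) * x ^ 2) ^ (q / 2)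
    + lamBar / 2 * (k * x - 1) ^ 2 + C
  have hfg : EqOn (fun x => g x - b * log x) f (Ioi 0) := fun x hx => by
    rw [hf, log_mul (by positivity) (ne_of_gt hx)]
    simp only [g, b, C]
    field_simp
    ring_nf
  have hg : ConvexOn ℝ univ g :=
    ((((convexOn_rpow_add_mul_sq (by positivity) zero_le_one (by linarith)).smul
          (by positivity : 0 ≤ μ₁ / p)).add
        ((convexOn_rpow_add_mul_sq (by positivity) (by positivity) (by linarith)).smul
          (by positivity : 0 ≤ μ₂ / q))).add
      ((convexOn_mul_sub_sq k 1).smul (by positivity : 0 ≤ lamBar / 2))).add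
      (convexOn_const C convex_univ)
  have hg_ge : ∀ x, C + lamBar / 2 * (k * x - 1) ^ 2 ≤ g x := fun x => by
    simp only [g]
    rw [add_comm C]
    gcongr
    exact le_add_of_nonneg_left (by positivity)
  have hb : 0 < b := by positivity
  have hg_top : Tendsto (fun x => g x - b * x) atTop atTop :=
    tendsto_atTop_mono (fun x => by linarith [hg_ge x]) <| tendsto_atTop_add_const_right _
      (lamBar / 2 + C) <|
        tendsto_mul_sq_sub_mul_atTop (a := lamBar / 2 * k ^ 2) (by positivity) (lamBar * k + b)
  have hconv : StrictConvexOn ℝ (Ioi 0) f :=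
    ((hg.subset (subset_univ _) (convex_Ioi 0)).strictConvexOn_sub_mul_log hb).congr hfg
  have h0 : Tendsto f (𝓝[>] 0) atTop :=
    (tendsto_sub_mul_log_nhdsGT_zero hb fun x => (le_add_of_nonneg_right (by positivity)).trans
      (hg_ge x)).congr' (eventuallyEq_nhdsWithin_of_eqOn hfg)
  have htop : Tendsto f atTop atTop :=
    (tendsto_sub_mul_log_atTop hb.le hg_top).congr' ((eventually_gt_atTop 0).mono hfg)
  exact ⟨hconv, h0, htop, hconv.existsUnique_forall_le_Ioi h0 htop⟩
end
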